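/- Let f : A → B be a finite homomorphism of commutative rings (i.e., B is finitely generated as an A-module via f). Then for every ideal J of B, the ring A⋈^f J is Noetherian if and only if A is Noetherian. -/

import Mathlib

/-! The projection `A ⋈^f J → A` is surjective, so `A` inherits noetherianity from the
amalgamation. Conversely, the amalgamation is a subring of `A × B` containing the image of
`a ↦ (a, f a)`, which makes it an `A`-submodule of `A × B`; the latter is a finite `A`-module,
hence noetherian when `A` is, and so the amalgamation is a noetherian ring. -/

/-- The amalgamation `A ⋈^f J = {(a, f a + j) | a ∈ A, j ∈ J}` of `A` with `B`
along the ideal `J` of `B`, with respect to the ring homomorphism `f : A → B`,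
as a subring of the product ring `A × B`. -/
def amalgamation {A B : Type*} [CommRing A] [CommRing B] (f : A →+* B) (J : Ideal B) :
    Subring (A × B) where
  carrier := {x : A × B | ∃ a : A, ∃ j ∈ J, x = (a, f a + j)}
  one_mem' := ⟨1, 0, J.zero_mem, by ext <;> simp⟩
  zero_mem' := ⟨0, 0, J.zero_mem, by ext <;> simp⟩
  mul_mem' := by
    rintro x y ⟨a, j, hj, rfl⟩ ⟨c, k, hk, rfl⟩
    refine ⟨a * c, f a * k + j * f c + j * k,
      J.add_mem (J.add_mem (J.mul_mem_left _ hk) (J.mul_mem_right _ hj)) (J.mul_mem_right _ hj),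
      ?_⟩
    simp only [Prod.mk_mul_mk, map_mul, Prod.mk.injEq]
    exact ⟨trivial, by ring⟩
  add_mem' := by
    rintro x y ⟨a, j, hj, rfl⟩ ⟨c, k, hk, rfl⟩
    refine ⟨a + c, j + k, J.add_mem hj hk, ?_⟩
    simp only [Prod.mk_add_mk, map_add, Prod.mk.injEq]
    exact ⟨trivial, by ring⟩
  neg_mem' := by
    rintro x ⟨a, j, hj, rfl⟩
    refine ⟨-a, -j, J.neg_mem hj, ?_⟩
    simp only [Prod.neg_mk, map_neg, Prod.mk.injEq]
    exact ⟨trivial, by ring⟩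

theorem RingHom.Finite.prod {R S T : Type*} [CommRing R] [CommRing S] [CommRing T]
    {f : R →+* S} {g : R →+* T} (hf : f.Finite) (hg : g.Finite) : (f.prod g).Finite := by
  algebraize [f, g]
  exact (inferInstance : Module.Finite R (S × T))

theorem isNoetherianRing_of_range_le {R S : Type*} [CommRing R] [CommRing S] [IsNoetherianRing R]
    {g : R →+* S} (hg : g.Finite) {T : Subring S} (hT : g.range ≤ T) : IsNoetherianRing T := by
  algebraize [g]
  let T' : Subalgebra R S := { T with algebraMap_mem' := fun r => hT ⟨r, rfl⟩ }
  have : IsNoetherianRing T' :=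
    isNoetherian_of_tower R (inferInstance : IsNoetherian R (Subalgebra.toSubmodule T'))
  exact this

namespace amalgamation

variable {A B : Type*} [CommRing A] [CommRing B] (f : A →+* B) (J : Ideal B)

theorem range_prod_le : ((RingHom.id A).prod f).range ≤ amalgamation f J := by
  rintro _ ⟨a, rfl⟩
  exact ⟨a, 0, J.zero_mem, by simp⟩

theorem fst_surjective :
    Function.Surjective ((RingHom.fst A B).comp (amalgamation f J).subtype) := fun a =>
  ⟨⟨(a, f a), range_prod_le f J ⟨a, rfl⟩⟩, rfl⟩

end amalgamation

theorem statement9 {A B : Type*} [CommRing A] [CommRing B] (f : A →+* B)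
    (hf : f.Finite) :
    ∀ J : Ideal B, (IsNoetherianRing ↥(amalgamation f J) ↔ IsNoetherianRing A) :=
  fun J => ⟨fun _ => isNoetherianRing_of_surjective _ A _ (amalgamation.fst_surjective f J),
    fun _ => isNoetherianRing_of_range_le ((RingHom.Finite.id A).prod hf)
      (amalgamation.range_prod_le f J)⟩
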